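/- arXiv:1609.00831 — 3 statements merged into one kernel-verified Lean document; each statement's English description precedes it below -/
import Mathlib

section
/- Let (X,d) be a metric space, D > 0 a real number, and let r : Fin n → X be a sequence of n requests with n ≤ 2D (n a natural number viewed as a real). Let op : Fin (n+1) → X be any sequence of points (the optimal algorithm's positions, with op 0 its initial position). Define C_OPT = ∑_{i=0}^{n-1} (d(op i, r i) + D * d(op i, op (i+1))). Then 4 * C_OPT ≥ 2 * ∑_i (d(op 0, r i) + d(op n, r i)) + (4 - 2n/D) * D * d(op 0, op n). -/
lemma path_bound {X : Type*} [MetricSpace X] {n : ℕ} (op : Fin (n + 1) → X) (i : Fin n) :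
    dist (op 0) (op i.castSucc) + dist (op i.castSucc) (op (Fin.last n)) ≤
      ∑ j : Fin n, dist (op j.castSucc) (op j.succ) := by
  set g : ℕ → X := fun j => op ⟨min j n, Nat.lt_succ_of_le (min_le_right _ _)⟩ with hg
  have hcast : ∀ j : Fin n, op j.castSucc = g j := by
    intro j
    have : j.castSucc = (⟨min j n, Nat.lt_succ_of_le (min_le_right _ _)⟩ : Fin (n + 1)) :=
      Fin.ext (by simp [Nat.min_eq_left j.isLt.le])
    rw [this]
  have hsucc : ∀ j : Fin n, op j.succ = g (j + 1) := by
    intro j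
    simp [hg, Fin.succ, Nat.min_eq_left j.isLt, Fin.ext_iff]
  have h0 : op 0 = g 0 := by simp [hg, Fin.ext_iff]
  have hlast : op (Fin.last n) = g n := by simp [hg, Fin.last, Fin.ext_iff]
  have hsum : ∑ j : Fin n, dist (op j.castSucc) (op j.succ)
      = ∑ j ∈ Finset.range n, dist (g j) (g (j + 1)) := by
    rw [Finset.sum_range fun j => dist (g j) (g (j + 1))]
    exact Finset.sum_congr rfl fun j _ => by rw [hcast, hsucc]
  rw [hsum, hcast, h0, hlast]
  have hsplit : ∑ j ∈ Finset.range n, dist (g j) (g (j + 1))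
      = ∑ j ∈ Finset.range i, dist (g j) (g (j + 1))
        + ∑ j ∈ Finset.Ico (i : ℕ) n, dist (g j) (g (j + 1)) := by
    rw [Finset.range_eq_Ico, ← Finset.sum_Ico_consecutive _ (Nat.zero_le _) i.isLt.le, Finset.range_eq_Ico]
  have h1 : dist (g 0) (g i) ≤ ∑ j ∈ Finset.range i, dist (g j) (g (j + 1)) :=
    dist_le_range_sum_dist g i
  have h2 : dist (g i) (g n) ≤ ∑ j ∈ Finset.Ico (i : ℕ) n, dist (g j) (g (j + 1)) := by
    have := dist_le_range_sum_dist (fun j => g ((i : ℕ) + j)) (n - i)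
    rw [Finset.sum_Ico_eq_sum_range]
    simp only [Nat.add_zero] at this
    have hni : (i : ℕ) + (n - i) = n := by omega
    rw [hni] at this
    refine this.trans (le_of_eq ?_)
    exact Finset.sum_congr rfl fun j _ => by ring_nf
  linarith [hsplit ▸ (add_le_add h1 h2)]

theorem opt_lower_bound {X : Type*} [MetricSpace X] (n : ℕ) (D : ℝ) (hD : 0 < D)
    (hn : (n : ℝ) ≤ 2 * D) (r : Fin n → X) (op : Fin (n + 1) → X) :
    4 * (∑ i : Fin n, (dist (op i.castSucc) (r i) + D * dist (op i.castSucc) (op i.succ))) ≥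
      2 * ∑ i : Fin n, (dist (op 0) (r i) + dist (op (Fin.last n)) (r i)) +
      (4 - 2 * (n : ℝ) / D) * D * dist (op 0) (op (Fin.last n)) := by
  set M := ∑ j : Fin n, dist (op j.castSucc) (op j.succ) with hM
  set S := ∑ i : Fin n, dist (op i.castSucc) (r i) with hS
  have hMnonneg : 0 ≤ M := Finset.sum_nonneg fun _ _ => dist_nonneg
  have hLHS : ∑ i : Fin n, (dist (op i.castSucc) (r i) + D * dist (op i.castSucc) (op i.succ))
      = S + D * M := by rw [hS, hM, Finset.mul_sum, ← Finset.sum_add_distrib]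
  have hdlast : dist (op 0) (op (Fin.last n)) ≤ M := by
    rcases Nat.eq_zero_or_pos n with h | h
    · subst h
      have : (Fin.last 0) = (0 : Fin 1) := rfl
      simp [this, hMnonneg]
    · have h3 := path_bound op ⟨0, h⟩
      have h0 : ((⟨0, h⟩ : Fin n).castSucc : Fin (n + 1)) = 0 := Fin.ext (by simp)
      rw [h0] at h3
      simpa using h3
  have hT : ∑ i : Fin n, (dist (op 0) (r i) + dist (op (Fin.last n)) (r i))
      ≤ 2 * S + n * M := by
    calc ∑ i : Fin n, (dist (op 0) (r i) + dist (op (Fin.last n)) (r i))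
        ≤ ∑ i : Fin n, (2 * dist (op i.castSucc) (r i) + M) := by
          refine Finset.sum_le_sum fun i _ => ?_
          have h1 := dist_triangle (op 0) (op i.castSucc) (r i)
          have h2 := dist_triangle (op (Fin.last n)) (op i.castSucc) (r i)
          have h3 := path_bound op i
          rw [dist_comm (op (Fin.last n)) (op i.castSucc)] at h2
          linarith
      _ = 2 * S + n * M := by
          rw [Finset.sum_add_distrib, Finset.sum_const, ← Finset.mul_sum]
          simp [hS, nsmul_eq_mul]
  rw [hLHS]
  have hcoeff : (4 - 2 * (n : ℝ) / D) * D = 4 * D - 2 * n := by field_simp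
  rw [hcoeff]
  nlinarith [mul_nonneg (by linarith : (0:ℝ) ≤ 4 * D - 2 * n)
    (by linarith : (0:ℝ) ≤ M - dist (op 0) (op (Fin.last n))), hMnonneg]
end

section
/- Let R_0 be the largest real root of R^3 - 5R^2 + 3R + 3 = 0. For c = c_T = 2(R_0+1)/(R_0^2 - 2R_0 - 1) and for all real a with 0 < a < R_0/(1+R_0), it holds that (c+2)/(c·a) + 1 ≥ R_0. -/
/-! The cubic is negative at 4 and positive at 5, so its largest root exceeds 4, hence exceeds
`1 + √2`, and `c_T > 0`. The threshold `c_T` is exactly the value of `c` for which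
`(R - 1) c a = c + 2` at `a = R / (1 + R)`, so for smaller `a` the second term exceeds `R`. -/

noncomputable def thresholdC (R : ℝ) : ℝ := 2 * (R + 1) / (R ^ 2 - 2 * R - 1)

lemma thresholdC_pos {R : ℝ} (hD : 0 < R ^ 2 - 2 * R - 1) (hR : 1 < R) : 0 < thresholdC R := by
  unfold thresholdC
  have : 0 < R + 1 := by linarith
  positivity

lemma sub_one_mul_thresholdC_mul_div {R : ℝ} (hD : R ^ 2 - 2 * R - 1 ≠ 0) (hR : 1 + R ≠ 0) :
    (R - 1) * (thresholdC R * (R / (1 + R))) = thresholdC R + 2 := by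
  rw [thresholdC, div_add' _ _ _ hD, div_mul_div_comm, mul_div_assoc',
    div_eq_div_iff (by positivity) hD]
  ring

lemma le_div_add_one_of_sub_one_mul_le {R c a : ℝ} (hca : 0 < c * a)
    (h : (R - 1) * (c * a) ≤ c + 2) : R ≤ (c + 2) / (c * a) + 1 := by
  have : R - 1 ≤ (c + 2) / (c * a) := by rwa [le_div_iff₀ hca]
  linarith

lemma le_thresholdC_add_two_div {R a : ℝ} (hD : 0 < R ^ 2 - 2 * R - 1) (hR : 1 < R)
    (ha : 0 < a) (haR : a < R / (1 + R)) :
    R ≤ (thresholdC R + 2) / (thresholdC R * a) + 1 := by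
  have hc := thresholdC_pos hD hR
  apply le_div_add_one_of_sub_one_mul_le (by positivity)
  calc (R - 1) * (thresholdC R * a)
      ≤ (R - 1) * (thresholdC R * (R / (1 + R))) := by gcongr
    _ = thresholdC R + 2 := sub_one_mul_thresholdC_mul_div hD.ne' (by linarith)

lemma four_lt_of_forall_root_le {R : ℝ}
    (hmax : ∀ x : ℝ, x ^ 3 - 5 * x ^ 2 + 3 * x + 3 = 0 → x ≤ R) : 4 < R := by
  have hcont : ContinuousOn (fun x : ℝ => x ^ 3 - 5 * x ^ 2 + 3 * x + 3) (Set.Icc 4 5) := by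
    fun_prop
  obtain ⟨r, hr, hroot⟩ := intermediate_value_Ioo (by norm_num : (4 : ℝ) ≤ 5) hcont
    (by norm_num : (0 : ℝ) ∈
      Set.Ioo ((4 : ℝ) ^ 3 - 5 * 4 ^ 2 + 3 * 4 + 3) (5 ^ 3 - 5 * 5 ^ 2 + 3 * 5 + 3))
  linarith [hr.1, hmax r hroot]

theorem second_term_bound_general (R0 : ℝ)
    (hmax : ∀ x : ℝ, x ^ 3 - 5 * x ^ 2 + 3 * x + 3 = 0 → x ≤ R0) :
    ∀ a : ℝ, 0 < a → a < R0 / (1 + R0) →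
      (2 * (R0 + 1) / (R0 ^ 2 - 2 * R0 - 1) + 2) /
        (2 * (R0 + 1) / (R0 ^ 2 - 2 * R0 - 1) * a) + 1 ≥ R0 := by
  intro a ha haR
  have hR4 := four_lt_of_forall_root_le hmax
  have hD : 0 < R0 ^ 2 - 2 * R0 - 1 := by nlinarith
  exact le_thresholdC_add_two_div hD (by linarith) ha haR

theorem second_term_bound (R0 : ℝ)
    (hroot : R0 ^ 3 - 5 * R0 ^ 2 + 3 * R0 + 3 = 0)
    (hmax : ∀ x : ℝ, x ^ 3 - 5 * x ^ 2 + 3 * x + 3 = 0 → x ≤ R0) :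
    ∀ a : ℝ, 0 < a → a < R0 / (1 + R0) →
      (2 * (R0 + 1) / (R0 ^ 2 - 2 * R0 - 1) + 2) /
        (2 * (R0 + 1) / (R0 ^ 2 - 2 * R0 - 1) * a) + 1 ≥ R0 :=
  second_term_bound_general R0 hmax
end

section
/- Let (X,d) be a metric space, D > 0, and let dlm, op0, op1, op2 ∈ X and R1, R2 nonempty finite multisets in X. Write [u,v] = D·d(u,v) and [v,S] = (D/|S|)·∑_{x∈S} d(v,x). Suppose g(v) := [dlm,v] + 2[v,R1] + [v,R2] satisfies g(v_g) ≤ 1.5·[dlm,R2] for some minimizer v_g of g. Then g(v_g) ≤ 0.5·([dlm,op0] + [op0,R1] + [R1,op0] + [op0,op1] + [op1,op2] + [op2,R2]) + 0.75·([dlm,op0] + [op0,op1] + [op1,R2]). -/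
open Multiset in
/-- For `S = 0` both means take the junk value `0 / 0 = 0`. -/
theorem Multiset.mean_dist_le_dist_add_mean_dist {X : Type*} [PseudoMetricSpace X]
    (u v : X) (S : Multiset X) :
    (S.map (dist u)).sum / card S ≤ dist u v + (S.map (dist v)).sum / card S := by
  rcases eq_or_ne S 0 with rfl | hS
  · simp
  have hcard : (0 : ℝ) < card S := by exact_mod_cast card_pos.mpr hS
  rw [div_le_iff₀ hcard, add_mul, div_mul_cancel₀ _ hcard.ne']
  calc (S.map (dist u)).sum ≤ (S.map fun x => dist u v + dist v x).sum :=
        sum_map_le_sum_map _ _ fun x _ => dist_triangle u v x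
    _ = dist u v * card S + (S.map (dist v)).sum := by
        rw [sum_map_add, map_const', sum_replicate, nsmul_eq_mul, mul_comm]

theorem short_phase_g_bound_general {X : Type*} [MetricSpace X] (D : ℝ) (hD : 0 < D)
    (dlm op0 op1 op2 : X) (R1 R2 : Multiset X)
    (bk : X → Multiset X → ℝ)
    (hbk : ∀ v S, bk v S = (D / (Multiset.card S : ℝ)) * (S.map (fun x => dist v x)).sum)
    (g : X → ℝ)
    (hg : ∀ v, g v = D * dist dlm v + 2 * bk v R1 + bk v R2)
    (vg : X) (hmin : ∀ v, g vg ≤ g v)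
    (hshort : g vg ≤ 1.5 * bk dlm R2) :
    g vg ≤
      0.5 * (D * dist dlm op0 + bk op0 R1 + bk op0 R1 + D * dist op0 op1 +
        D * dist op1 op2 + bk op2 R2) +
      0.75 * (D * dist dlm op0 + D * dist op0 op1 + bk op1 R2) := by
  have bk_triangle (u v : X) (S : Multiset X) : bk u S ≤ D * dist u v + bk v S := by
    rw [hbk, hbk, div_mul_eq_mul_div, div_mul_eq_mul_div, mul_div_assoc, mul_div_assoc,
      ← mul_add]
    exact mul_le_mul_of_nonneg_left (S.mean_dist_le_dist_add_mean_dist u v) hD.le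
  have hg_op0 : g vg ≤ g op0 := hmin op0
  rw [hg op0] at hg_op0
  -- average `g vg ≤ g op0` with `hshort`, then push `bk op0 R2` and `bk dlm R2` along op0, op1, op2
  linarith [bk_triangle dlm op0 R2, bk_triangle op0 op1 R2, bk_triangle op1 op2 R2]

theorem short_phase_g_bound {X : Type*} [MetricSpace X] (D : ℝ) (hD : 0 < D)
    (dlm op0 op1 op2 : X) (R1 R2 : Multiset X) (hR1 : R1 ≠ 0) (hR2 : R2 ≠ 0)
    (bk : X → Multiset X → ℝ)
    (hbk : ∀ v S, bk v S = (D / (Multiset.card S : ℝ)) * (S.map (fun x => dist v x)).sum)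
    (g : X → ℝ)
    (hg : ∀ v, g v = D * dist dlm v + 2 * bk v R1 + bk v R2)
    (vg : X) (hmin : ∀ v, g vg ≤ g v)
    (hshort : g vg ≤ 1.5 * bk dlm R2) :
    g vg ≤
      0.5 * (D * dist dlm op0 + bk op0 R1 + bk op0 R1 + D * dist op0 op1 +
        D * dist op1 op2 + bk op2 R2) +
      0.75 * (D * dist dlm op0 + D * dist op0 op1 + bk op1 R2) :=
  short_phase_g_bound_general D hD dlm op0 op1 op2 R1 R2 bk hbk g hg vg hmin hshort
end
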